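/- arXiv:2009.12004 — 4 statements merged into one kernel-verified Lean document; each statement's English description precedes it below -/
import Mathlib

section
/- Consider two point vortices in the open upper half-plane with strengths Γ_1, Γ_2, Γ_1 + Γ_2 ≠ 0, evolving by the half-plane point vortex Hamiltonian flow on a maximal interval. Then for any finite time T in the closure of the interval of existence, the solution cannot converge as t → T to a configuration where the two vortices collide (x_1 = x_2, y_1 = y_2 with the common y > 0), because such a limit would force the conserved Hamiltonian H = (1/2π) log[(2y_1)^{Γ_1²}(2y_2)^{Γ_2²}(((x_1-x_2)²+(y_1+y_2)²)/((x_1-x_2)²+(y_1-y_2)²))^{Γ_1Γ_2}] to tend to +∞ (when Γ_1Γ_2 > 0) or -∞ (when Γ_1Γ_2 < 0), contradicting its constancy. -/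
open Real Filter Topology Set

/-- Two vortices in the half-plane with Γ₁ + Γ₂ ≠ 0 evolving with conserved
half-plane Hamiltonian cannot converge in finite time T to a collision
(x₁ = x₂, y₁ = y₂ with common y = c > 0): such a limit would force the conserved
Hamiltonian to tend to ±∞. -/
theorem half_plane_two_vortex_no_collision (Γ₁ Γ₂ : ℝ) (hΓ₁ : Γ₁ ≠ 0) (hΓ₂ : Γ₂ ≠ 0)
    (hΓ : Γ₁ + Γ₂ ≠ 0) (x₁ y₁ x₂ y₂ : ℝ → ℝ) (T a c : ℝ) (hc : 0 < c)
    (hy₁ : ∀ t ∈ Iio T, 0 < y₁ t) (hy₂ : ∀ t ∈ Iio T, 0 < y₂ t)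
    (hsep : ∀ t ∈ Iio T, (x₁ t, y₁ t) ≠ (x₂ t, y₂ t))
    (hHconst : ∀ t ∈ Iio T, ∀ s ∈ Iio T,
      (1 / (2 * π)) *
        (Γ₁ * Γ₂ * Real.log ((x₁ t - x₂ t) ^ 2 + (y₁ t + y₂ t) ^ 2)
         - Γ₁ * Γ₂ * Real.log ((x₁ t - x₂ t) ^ 2 + (y₁ t - y₂ t) ^ 2)
         + Γ₁ ^ 2 * Real.log (2 * y₁ t) + Γ₂ ^ 2 * Real.log (2 * y₂ t)) =
      (1 / (2 * π)) *
        (Γ₁ * Γ₂ * Real.log ((x₁ s - x₂ s) ^ 2 + (y₁ s + y₂ s) ^ 2)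
         - Γ₁ * Γ₂ * Real.log ((x₁ s - x₂ s) ^ 2 + (y₁ s - y₂ s) ^ 2)
         + Γ₁ ^ 2 * Real.log (2 * y₁ s) + Γ₂ ^ 2 * Real.log (2 * y₂ s)))
    (hlim : Tendsto (fun t => (x₁ t, y₁ t, x₂ t, y₂ t)) (nhdsWithin T (Iio T))
      (nhds (a, c, a, c))) :
    False := by
  have hπ : (1 / (2 * π)) ≠ 0 := by
    have := Real.pi_pos; positivity
  have hneb : (nhdsWithin T (Iio T)).NeBot := nhdsLT_neBot T
  set l := nhdsWithin T (Iio T) with hl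
  have hmem : ∀ᶠ t in l, t ∈ Iio T := eventually_mem_nhdsWithin
  have hx1 : Tendsto x₁ l (nhds a) := (continuous_fst.tendsto _).comp hlim
  have hy1 : Tendsto y₁ l (nhds c) :=
    ((continuous_fst.comp continuous_snd).tendsto _).comp hlim
  have hx2 : Tendsto x₂ l (nhds a) :=
    ((continuous_fst.comp (continuous_snd.comp continuous_snd)).tendsto _).comp hlim
  have hy2 : Tendsto y₂ l (nhds c) :=
    ((continuous_snd.comp (continuous_snd.comp continuous_snd)).tendsto _).comp hlim
  set d : ℝ → ℝ := fun t => (x₁ t - x₂ t) ^ 2 + (y₁ t - y₂ t) ^ 2 with hd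
  have hd0 : Tendsto d l (nhds 0) := by
    have : Tendsto d l (nhds ((a - a) ^ 2 + (c - c) ^ 2)) :=
      (((hx1.sub hx2).pow 2).add ((hy1.sub hy2).pow 2))
    simpa using this
  have hdpos : ∀ t ∈ Iio T, 0 < d t := by
    intro t ht
    rcases eq_or_ne (x₁ t) (x₂ t) with h | h
    · have hy : y₁ t - y₂ t ≠ 0 := by
        intro hy
        exact hsep t ht (by rw [h, sub_eq_zero.mp hy])
      positivity
    · have hx : x₁ t - x₂ t ≠ 0 := sub_ne_zero.mpr h
      positivity
  have hdlog : Tendsto (fun t => Real.log (d t)) l atBot := by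
    apply Real.tendsto_log_nhdsGT_zero.comp
    rw [tendsto_nhdsWithin_iff]
    exact ⟨hd0, hmem.mono fun t ht => hdpos t ht⟩
  set S : ℝ → ℝ := fun t => (x₁ t - x₂ t) ^ 2 + (y₁ t + y₂ t) ^ 2 with hS
  have hSlim : Tendsto S l (nhds ((a - a) ^ 2 + (c + c) ^ 2)) :=
    (((hx1.sub hx2).pow 2).add ((hy1.add hy2).pow 2))
  have hSne : (a - a) ^ 2 + (c + c) ^ 2 ≠ 0 := by positivity
  set g : ℝ → ℝ := fun t =>
    Γ₁ * Γ₂ * Real.log (S t) + Γ₁ ^ 2 * Real.log (2 * y₁ t)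
      + Γ₂ ^ 2 * Real.log (2 * y₂ t) with hg
  have hglim : Tendsto g l (nhds (Γ₁ * Γ₂ * Real.log ((a - a) ^ 2 + (c + c) ^ 2)
      + Γ₁ ^ 2 * Real.log (2 * c) + Γ₂ ^ 2 * Real.log (2 * c))) := by
    have h1 : Tendsto (fun t => Real.log (S t)) l
        (nhds (Real.log ((a - a) ^ 2 + (c + c) ^ 2))) := hSlim.log hSne
    have h2 : Tendsto (fun t => Real.log (2 * y₁ t)) l (nhds (Real.log (2 * c))) :=
      ((hy1.const_mul 2).log (by positivity))
    have h3 : Tendsto (fun t => Real.log (2 * y₂ t)) l (nhds (Real.log (2 * c))) :=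
      ((hy2.const_mul 2).log (by positivity))
    exact ((h1.const_mul _).add (h2.const_mul _)).add (h3.const_mul _)
  have hs₀ : T - 1 ∈ Iio T := by simp
  set K : ℝ := g (T - 1) - Γ₁ * Γ₂ * Real.log (d (T - 1)) with hK
  have key : (fun t => g t - K) =ᶠ[l] (fun t => Γ₁ * Γ₂ * Real.log (d t)) := by
    filter_upwards [hmem] with t ht
    have h := hHconst t ht (T - 1) hs₀
    have h' := mul_left_cancel₀ hπ h
    simp only [hK, hg, hS, hd] at *
    linarith
  have hu : Tendsto (fun t => Γ₁ * Γ₂ * Real.log (d t)) l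
      (nhds ((Γ₁ * Γ₂ * Real.log ((a - a) ^ 2 + (c + c) ^ 2)
      + Γ₁ ^ 2 * Real.log (2 * c) + Γ₂ ^ 2 * Real.log (2 * c)) - K)) :=
    (hglim.sub tendsto_const_nhds).congr' key
  have hΓΓ : Γ₁ * Γ₂ ≠ 0 := mul_ne_zero hΓ₁ hΓ₂
  rcases hΓΓ.lt_or_gt with hlt | hgt
  · have : Tendsto (fun t => Γ₁ * Γ₂ * Real.log (d t)) l atTop :=
      (tendsto_const_mul_atTop_of_neg hlt).mpr hdlog
    exact not_tendsto_nhds_of_tendsto_atTop this _ hu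
  · have : Tendsto (fun t => Γ₁ * Γ₂ * Real.log (d t)) l atBot :=
      (tendsto_const_mul_atBot_of_pos hgt).mpr hdlog
    exact not_tendsto_nhds_of_tendsto_atBot this _ hu
end

section
/- For two point vortices in the upper half-plane with Γ_1, Γ_2 ≠ 0 evolving by the half-plane Hamiltonian flow, the solution cannot converge in finite time to a configuration where exactly one vortex hits the boundary (y_1 → 0 while y_2 → c > 0 and the vortices stay separated): in such a limit the conserved Hamiltonian H tends to ±∞, a contradiction. -/
open Real Filter Topology Set

lemma abs_log_le_of_mem {a b x : ℝ} (ha : 0 < a) (hax : a ≤ x) (hxb : x ≤ b) :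
    |Real.log x| ≤ max |Real.log a| |Real.log b| := by
  rw [abs_le]
  constructor
  · calc -(max |Real.log a| |Real.log b|) ≤ -|Real.log a| := by
          simp [le_max_left]
      _ ≤ Real.log a := by
          have := neg_abs_le (Real.log a); linarith
      _ ≤ Real.log x := Real.log_le_log ha hax
  · calc Real.log x ≤ Real.log b := Real.log_le_log (lt_of_lt_of_le ha hax) hxb
      _ ≤ |Real.log b| := le_abs_self _
      _ ≤ max |Real.log a| |Real.log b| := le_max_right _ _

lemma mul_log_le_abs_max {Γ a b x : ℝ} (ha : 0 < a) (hax : a ≤ x) (hxb : x ≤ b) :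
    Γ * Real.log x ≤ |Γ| * max |Real.log a| |Real.log b| := by
  calc Γ * Real.log x ≤ |Γ * Real.log x| := le_abs_self _
    _ = |Γ| * |Real.log x| := abs_mul _ _
    _ ≤ |Γ| * max |Real.log a| |Real.log b| :=
        mul_le_mul_of_nonneg_left (abs_log_le_of_mem ha hax hxb) (abs_nonneg _)

/-- If exactly one vortex approaches the boundary (y₁ → 0, y₂ → c > 0) while the
vortices stay separated (mutual squared distance bounded away from 0 and ∞), then
the half-plane Hamiltonian blows up: |H(t)| → ∞ as t → T⁻. Hence a solution with
conserved Hamiltonian cannot converge to such a configuration. -/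
theorem half_plane_two_vortex_no_boundary_hit (Γ₁ Γ₂ : ℝ) (hΓ₁ : Γ₁ ≠ 0) (hΓ₂ : Γ₂ ≠ 0)
    (x₁ y₁ x₂ y₂ : ℝ → ℝ) (T c ε M : ℝ) (hc : 0 < c) (hε : 0 < ε)
    (hy₁ : ∀ t ∈ Iio T, 0 < y₁ t) (hy₂ : ∀ t ∈ Iio T, 0 < y₂ t)
    (hy₁lim : Tendsto y₁ (nhdsWithin T (Iio T)) (nhds 0))
    (hy₂lim : Tendsto y₂ (nhdsWithin T (Iio T)) (nhds c))
    (hsep : ∀ t ∈ Iio T,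
      ε ≤ (x₁ t - x₂ t) ^ 2 + (y₁ t - y₂ t) ^ 2 ∧
      (x₁ t - x₂ t) ^ 2 + (y₁ t - y₂ t) ^ 2 ≤ M) :
    Tendsto (fun t => |(1 / (2 * π)) *
      (Γ₁ * Γ₂ * Real.log ((x₁ t - x₂ t) ^ 2 + (y₁ t + y₂ t) ^ 2)
       - Γ₁ * Γ₂ * Real.log ((x₁ t - x₂ t) ^ 2 + (y₁ t - y₂ t) ^ 2)
       + Γ₁ ^ 2 * Real.log (2 * y₁ t) + Γ₂ ^ 2 * Real.log (2 * y₂ t))|)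
      (nhdsWithin T (Iio T)) atTop := by
  set l := nhdsWithin T (Iio T)
  set D : ℝ := |Γ₁ * Γ₂| * max |Real.log (c ^ 2 / 4)| |Real.log (M + 4 * c ^ 2)|
      + |Γ₁ * Γ₂| * max |Real.log ε| |Real.log M|
      + Γ₂ ^ 2 * max |Real.log c| |Real.log (3 * c)| with hD
  have hmem : ∀ᶠ t in l, t ∈ Iio T := self_mem_nhdsWithin
  have h1 : ∀ᶠ t in l, y₁ t < c / 2 :=
    hy₁lim (Iio_mem_nhds (by linarith))
  have h2 : ∀ᶠ t in l, y₂ t ∈ Ioo (c / 2) (3 * c / 2) :=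
    hy₂lim (Ioo_mem_nhds (by linarith) (by linarith))
  -- the inner function tends to -∞
  have hinner : Tendsto (fun t =>
      Γ₁ * Γ₂ * Real.log ((x₁ t - x₂ t) ^ 2 + (y₁ t + y₂ t) ^ 2)
       - Γ₁ * Γ₂ * Real.log ((x₁ t - x₂ t) ^ 2 + (y₁ t - y₂ t) ^ 2)
       + Γ₁ ^ 2 * Real.log (2 * y₁ t) + Γ₂ ^ 2 * Real.log (2 * y₂ t)) l atBot := by
    have hlog : Tendsto (fun t => Real.log (2 * y₁ t)) l atBot := by
      apply Real.tendsto_log_nhdsGT_zero.comp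
      rw [tendsto_nhdsWithin_iff]
      constructor
      · have := hy₁lim.const_mul 2
        simpa using this
      · filter_upwards [hmem] with t ht
        have := hy₁ t ht
        simp only [Set.mem_Ioi]
        linarith
    have hmaj : Tendsto (fun t => D + Γ₁ ^ 2 * Real.log (2 * y₁ t)) l atBot := by
      apply tendsto_atBot_add_const_left
      exact (hlog.const_mul_atBot (by positivity))
    apply tendsto_atBot_mono' l _ hmaj
    filter_upwards [hmem, h1, h2] with t ht hlt h2t
    obtain ⟨hs1, hs2⟩ := hsep t ht
    have hy1 := hy₁ t ht
    have hy2 := hy₂ t ht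
    have hx2 : (x₁ t - x₂ t) ^ 2 ≤ M := by nlinarith [sq_nonneg (y₁ t - y₂ t)]
    have ha1 : c ^ 2 / 4 ≤ (x₁ t - x₂ t) ^ 2 + (y₁ t + y₂ t) ^ 2 := by
      nlinarith [sq_nonneg (x₁ t - x₂ t), h2t.1]
    have hb1 : (x₁ t - x₂ t) ^ 2 + (y₁ t + y₂ t) ^ 2 ≤ M + 4 * c ^ 2 := by
      nlinarith [h2t.2, hlt]
    have t1 := mul_log_le_abs_max (Γ := Γ₁ * Γ₂) (by positivity : (0:ℝ) < c ^ 2 / 4) ha1 hb1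
    have t2 := mul_log_le_abs_max (Γ := -(Γ₁ * Γ₂)) hε hs1 hs2
    rw [abs_neg] at t2
    have ha3 : c ≤ 2 * y₂ t := by linarith [h2t.1]
    have hb3 : 2 * y₂ t ≤ 3 * c := by linarith [h2t.2]
    have t3 := mul_log_le_abs_max (Γ := Γ₂ ^ 2) hc ha3 hb3
    rw [abs_of_nonneg (by positivity : (0:ℝ) ≤ Γ₂ ^ 2)] at t3
    simp only [hD]
    nlinarith [t1, t2, t3]
  have hπ : (0:ℝ) < 1 / (2 * π) := by
    have := Real.pi_pos; positivity
  have hmul : Tendsto (fun t => (1 / (2 * π)) *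
      (Γ₁ * Γ₂ * Real.log ((x₁ t - x₂ t) ^ 2 + (y₁ t + y₂ t) ^ 2)
       - Γ₁ * Γ₂ * Real.log ((x₁ t - x₂ t) ^ 2 + (y₁ t - y₂ t) ^ 2)
       + Γ₁ ^ 2 * Real.log (2 * y₁ t) + Γ₂ ^ 2 * Real.log (2 * y₂ t))) l atBot :=
    hinner.const_mul_atBot hπ
  exact tendsto_abs_atBot_atTop.comp hmul
end

section
/- For positive integers m ≠ l and initial radii a(0) = a > 0, b(0) = b > 0, the functions a(t) = a^{m/(m-l)}(a - (l-m)b^{-1}t)^{l/(l-m)} and b(t) = b^{l/(l-m)}(b + (m-l)a^{-1}t)^{m/(m-l)} solve the system a'(t) = -l/b(t), b'(t) = m/a(t) on the maximal interval of time on which both expressions inside the powers are positive. -/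
open Real Filter Topology

/-!
Both bases are multiples of one affine function: with `r(t) = 1 - c t`, `c = (l - m)/(a b)`, they are
`a r(t)` and `b r(t)`. As `p + q = 1` for `p = m/(m-l)`, `q = l/(l-m)`, the two formulas collapse to
`a(t) = a r^q` and `b(t) = b r^p`; then `q - 1 = -p` makes `a'(t) = -a q c r^(q-1)` a multiple of
`1 / b(t)`, with factor `-a b c q = -l`, and symmetrically for `b'`.
-/

section

variable {A B c p q x t : ℝ}

theorem rpow_mul_mul_rpow_eq (hA : 0 < A) (hx : 0 ≤ x) (hpq : p + q = 1) :
    A ^ p * (A * x) ^ q = A * x ^ q := by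
  rw [mul_rpow hA.le hx, ← mul_assoc, ← rpow_add hA, hpq, rpow_one]

theorem hasDerivAt_mul_one_sub_mul_rpow (hpq : p + q = 1) (hB : B ≠ 0) (ht : 0 < 1 - c * t) :
    HasDerivAt (fun s => A * (1 - c * s) ^ q) (-(A * B * c * q) / (B * (1 - c * t) ^ p)) t := by
  have hr : HasDerivAt (fun s => 1 - c * s) (-c) t := by
    simpa using ((hasDerivAt_id t).const_mul c).const_sub 1
  refine ((hr.rpow_const (p := q) (Or.inl ht.ne')).const_mul A).congr_deriv ?_
  rw [show q - 1 = -p by linarith, rpow_neg ht.le]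
  have : (1 - c * t) ^ p ≠ 0 := (rpow_pos_of_pos ht p).ne'
  field_simp

end

theorem sphere_product_explicit_solution_general (m l : ℕ)
    (hml : m ≠ l) (a b : ℝ) (ha : 0 < a) (hb : 0 < b) :
    ∀ t : ℝ, 0 < a - ((l : ℝ) - m) * b⁻¹ * t → 0 < b + ((m : ℝ) - l) * a⁻¹ * t →
      HasDerivAt (fun s : ℝ =>
          a ^ ((m : ℝ) / ((m : ℝ) - l)) *
            (a - ((l : ℝ) - m) * b⁻¹ * s) ^ ((l : ℝ) / ((l : ℝ) - m)))
        (-(l : ℝ) /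
          (b ^ ((l : ℝ) / ((l : ℝ) - m)) *
            (b + ((m : ℝ) - l) * a⁻¹ * t) ^ ((m : ℝ) / ((m : ℝ) - l)))) t ∧
      HasDerivAt (fun s : ℝ =>
          b ^ ((l : ℝ) / ((l : ℝ) - m)) *
            (b + ((m : ℝ) - l) * a⁻¹ * s) ^ ((m : ℝ) / ((m : ℝ) - l)))
        ((m : ℝ) /
          (a ^ ((m : ℝ) / ((m : ℝ) - l)) *
            (a - ((l : ℝ) - m) * b⁻¹ * t) ^ ((l : ℝ) / ((l : ℝ) - m)))) t := by
  intro t hu _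
  have hml' : (m : ℝ) - l ≠ 0 := sub_ne_zero.mpr (by exact_mod_cast hml)
  have hlm' : (l : ℝ) - m ≠ 0 := fun h => hml' (by linarith)
  have hpq : (m : ℝ) / (m - l) + l / (l - m) = 1 := by field_simp; ring
  have hqp : (l : ℝ) / (l - m) + m / (m - l) = 1 := by rw [add_comm, hpq]
  set c : ℝ := ((l : ℝ) - m) / (a * b)
  have hua : ∀ s, a - ((l : ℝ) - m) * b⁻¹ * s = a * (1 - c * s) := by
    intro s; simp only [c]; field_simp
  have hvb : ∀ s, b + ((m : ℝ) - l) * a⁻¹ * s = b * (1 - c * s) := by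
    intro s; simp only [c]; field_simp; ring
  simp only [hua, hvb] at hu ⊢
  have hr : 0 < 1 - c * t := pos_of_mul_pos_right hu ha.le
  -- `a ^ p * (a * r) ^ q = a * r ^ q` needs `0 ≤ r`, so the functions are only compared near `t`.
  have hr_near : ∀ᶠ s in 𝓝 t, 0 < 1 - c * s :=
    ((continuous_const.sub (continuous_const.mul continuous_id)).tendsto t).eventually
      (lt_mem_nhds hr)
  rw [rpow_mul_mul_rpow_eq hb hr.le hqp, rpow_mul_mul_rpow_eq ha hr.le hpq]
  constructor
  · refine ((hasDerivAt_mul_one_sub_mul_rpow (A := a) hpq hb.ne' hr).congr_of_eventuallyEq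
      (hr_near.mono fun s hs => rpow_mul_mul_rpow_eq ha hs.le hpq)).congr_deriv ?_
    rw [show a * b * c * (l / (l - m)) = l by simp only [c]; field_simp]
  · refine ((hasDerivAt_mul_one_sub_mul_rpow (A := b) hqp ha.ne' hr).congr_of_eventuallyEq
      (hr_near.mono fun s hs => rpow_mul_mul_rpow_eq hb hs.le hqp)).congr_deriv ?_
    rw [show b * a * c * (m / (m - l)) = -m by simp only [c]; field_simp; ring, neg_neg]

/-- For m ≠ l, the explicit formulas
a(t) = a^{m/(m-l)} (a - (l-m)b⁻¹t)^{l/(l-m)},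
b(t) = b^{l/(l-m)} (b + (m-l)a⁻¹t)^{m/(m-l)}
solve a' = -l/b, b' = m/a wherever both bases are positive. -/
theorem sphere_product_explicit_solution (m l : ℕ) (hm : 0 < m) (hl : 0 < l)
    (hml : m ≠ l) (a b : ℝ) (ha : 0 < a) (hb : 0 < b) :
    ∀ t : ℝ, 0 < a - ((l : ℝ) - m) * b⁻¹ * t → 0 < b + ((m : ℝ) - l) * a⁻¹ * t →
      HasDerivAt (fun s : ℝ =>
          a ^ ((m : ℝ) / ((m : ℝ) - l)) *
            (a - ((l : ℝ) - m) * b⁻¹ * s) ^ ((l : ℝ) / ((l : ℝ) - m)))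
        (-(l : ℝ) /
          (b ^ ((l : ℝ) / ((l : ℝ) - m)) *
            (b + ((m : ℝ) - l) * a⁻¹ * t) ^ ((m : ℝ) / ((m : ℝ) - l)))) t ∧
      HasDerivAt (fun s : ℝ =>
          b ^ ((l : ℝ) / ((l : ℝ) - m)) *
            (b + ((m : ℝ) - l) * a⁻¹ * s) ^ ((m : ℝ) / ((m : ℝ) - l)))
        ((m : ℝ) /
          (a ^ ((m : ℝ) / ((m : ℝ) - l)) *
            (a - ((l : ℝ) - m) * b⁻¹ * t) ^ ((l : ℝ) / ((l : ℝ) - m)))) t :=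
  sphere_product_explicit_solution_general m l hml a b ha hb
end

section
/- For positive integers m, l with 0 < m < l and initial radii a(0) = a > 0, b(0) = b > 0, the solution a(t) = a^{m/(m-l)}(a - (l-m)b^{-1}t)^{l/(l-m)}, b(t) = b^{l/(l-m)}(b + (m-l)a^{-1}t)^{m/(m-l)} of the system a' = -l/b, b' = m/a satisfies a(t) → 0 and b(t) → +∞ as t → T⁻ where T = ab/(l-m); i.e., the sphere product membrane collapses in finite time T = a(0)b(0)/(l-m). -/
open Real Filter Topology Set

lemma rpow_neg_tendsto_atTop {q : ℝ} (hq : q < 0) :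
    Tendsto (fun x : ℝ => x ^ q) (nhdsWithin 0 (Ioi 0)) atTop := by
  have h1 : Tendsto (fun x : ℝ => (x⁻¹) ^ (-q)) (nhdsWithin 0 (Ioi 0)) atTop :=
    (tendsto_rpow_atTop (by linarith)).comp tendsto_inv_nhdsGT_zero
  refine h1.congr' ?_
  filter_upwards [self_mem_nhdsWithin] with x hx
  rw [Real.inv_rpow hx.le, ← Real.rpow_neg hx.le, neg_neg]

/-- For 0 < m < l, the explicit sphere product solution collapses in finite time
T = ab/(l - m): a(t) → 0 and b(t) → +∞ as t → T⁻. -/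
theorem sphere_product_finite_time_collapse (m l : ℕ) (hm : 0 < m) (hml : m < l)
    (a b : ℝ) (ha : 0 < a) (hb : 0 < b) :
    Tendsto (fun t : ℝ =>
        a ^ ((m : ℝ) / ((m : ℝ) - l)) *
          (a - ((l : ℝ) - m) * b⁻¹ * t) ^ ((l : ℝ) / ((l : ℝ) - m)))
      (nhdsWithin (a * b / ((l : ℝ) - m)) (Iio (a * b / ((l : ℝ) - m)))) (nhds 0) ∧
    Tendsto (fun t : ℝ =>
        b ^ ((l : ℝ) / ((l : ℝ) - m)) *
          (b + ((m : ℝ) - l) * a⁻¹ * t) ^ ((m : ℝ) / ((m : ℝ) - l)))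
      (nhdsWithin (a * b / ((l : ℝ) - m)) (Iio (a * b / ((l : ℝ) - m)))) atTop := by
  have hlm : (0 : ℝ) < (l : ℝ) - m := by
    have : (m : ℝ) < l := by exact_mod_cast hml
    linarith
  set T : ℝ := a * b / ((l : ℝ) - m) with hT
  constructor
  · -- a(t) → 0
    have hinner : Tendsto (fun t : ℝ => a - ((l : ℝ) - m) * b⁻¹ * t)
        (nhdsWithin T (Iio T)) (nhds 0) := by
      have hc : Tendsto (fun t : ℝ => a - ((l : ℝ) - m) * b⁻¹ * t) (nhds T)
          (nhds (a - ((l : ℝ) - m) * b⁻¹ * T)) :=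
        ((continuous_const.sub ((continuous_const.mul continuous_id))).tendsto T)
      have hval : a - ((l : ℝ) - m) * b⁻¹ * T = 0 := by
        rw [hT]; field_simp; ring
      rw [hval] at hc
      exact hc.mono_left nhdsWithin_le_nhds
    have hcont : Tendsto (fun x : ℝ => x ^ ((l : ℝ) / ((l : ℝ) - m))) (nhds 0)
        (nhds ((0:ℝ) ^ ((l : ℝ) / ((l : ℝ) - m)))) := by
      apply ContinuousAt.tendsto
      apply Real.continuousAt_rpow_const
      right
      exact (div_pos (by exact_mod_cast hm.trans hml : (0:ℝ) < l) hlm).le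
    rw [Real.zero_rpow (div_pos (by exact_mod_cast hm.trans hml : (0:ℝ) < l) hlm).ne'] at hcont
    have := hcont.comp hinner
    simpa using this.const_mul (a ^ ((m : ℝ) / ((m : ℝ) - l)))
  · -- b(t) → ∞
    have hinner : Tendsto (fun t : ℝ => b + ((m : ℝ) - l) * a⁻¹ * t)
        (nhdsWithin T (Iio T)) (nhdsWithin 0 (Ioi 0)) := by
      rw [tendsto_nhdsWithin_iff]
      constructor
      · have hc : Tendsto (fun t : ℝ => b + ((m : ℝ) - l) * a⁻¹ * t) (nhds T)
            (nhds (b + ((m : ℝ) - l) * a⁻¹ * T)) :=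
          ((continuous_const.add ((continuous_const.mul continuous_id))).tendsto T)
        have hval : b + ((m : ℝ) - l) * a⁻¹ * T = 0 := by rw [hT]; field_simp; ring
        rw [hval] at hc
        exact hc.mono_left nhdsWithin_le_nhds
      · filter_upwards [self_mem_nhdsWithin] with t ht
        simp only [mem_Iio] at ht
        simp only [mem_Ioi]
        have : ((m : ℝ) - l) * a⁻¹ < 0 := by
          apply mul_neg_of_neg_of_pos (by linarith) (by positivity)
        nlinarith [mul_lt_mul_of_neg_left ht this,
          (by rw [hT]; field_simp; ring : ((m : ℝ) - l) * a⁻¹ * T = -b)]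
    have hq : (m : ℝ) / ((m : ℝ) - l) < 0 := by
      apply div_neg_of_pos_of_neg
      · exact_mod_cast hm
      · linarith
    have := (rpow_neg_tendsto_atTop hq).comp hinner
    exact Tendsto.const_mul_atTop (by positivity) this
end
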